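/- arXiv:2211.08324 — 2 statements merged into one kernel-verified Lean document; each statement's English description precedes it below -/
import Mathlib

section
/- Let p ≥ 1 and q ≥ 0 be integers and let H' ⊆ E ∖ H. Then H' covers all violated cuts (i.e. δ_{H'}(S) ≠ ∅ for every violated vertex set S) if and only if H' is a feasible augmentation for every violating edge set F. -/
open scoped Classical

/-- The edges of `H` with exactly one endpoint in `S` (the cut `δ_H(S)`).
Edges are abstract objects of type `E` with endpoint maps `g₁ g₂ : E → V`. -/
noncomputable def cutEdges {V E : Type*} (g₁ g₂ : E → V) (H : Finset E) (S : Finset V) :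
    Finset E :=
  H.filter fun e => (g₁ e ∈ S) ≠ (g₂ e ∈ S)

/-- `u` and `v` are connected by a path using only edges of `H`. -/
def ConnectedIn {V E : Type*} (g₁ g₂ : E → V) (H : Finset E) (u v : V) : Prop :=
  Relation.ReflTransGen (fun a b => ∃ e ∈ H, (g₁ e = a ∧ g₂ e = b) ∨ (g₁ e = b ∧ g₂ e = a)) u v

/-- `u` and `v` are `p`-edge-connected in `H`: for every `D ⊆ H` with `|D| ≤ p - 1`,
`u` and `v` are connected in `H \ D`. -/
def PEdgeConnected {V E : Type*} (g₁ g₂ : E → V) (p : ℕ) (H : Finset E) (u v : V) : Prop :=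
  ∀ D : Finset E, D ⊆ H → D.card ≤ p - 1 → ConnectedIn g₁ g₂ (H \ D) u v

/-- `u` and `v` are `(p,q)`-flex-connected in `H` (with unsafe edge set `Unsafe`):
for every `U ⊆ Unsafe` with `|U| ≤ q`, `u` and `v` are `p`-edge-connected in `H \ U`. -/
def FlexConnected {V E : Type*} (g₁ g₂ : E → V) (Unsafe : Finset E) (p q : ℕ)
    (H : Finset E) (u v : V) : Prop :=
  ∀ U : Finset E, U ⊆ Unsafe → U.card ≤ q → PEdgeConnected g₁ g₂ p (H \ U) u v

/-- A vertex set `S` is violated (w.r.t. the partial solution `H`, safe edges `Safe`,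
parameters `p q` and terminal pairs `st`): exactly one of `s_i, t_i` lies in `S` for
some `i`, `|δ_H(S)| = p + q`, and `|δ_H(S) ∩ Safe| ≤ p - 1`. -/
def Violated {V E : Type*} (g₁ g₂ : E → V) (Safe : Finset E) (p q : ℕ) {k : ℕ}
    (st : Fin k → V × V) (H : Finset E) (S : Finset V) : Prop :=
  (∃ i : Fin k, ((st i).1 ∈ S) ≠ ((st i).2 ∈ S)) ∧
    (cutEdges g₁ g₂ H S).card = p + q ∧
    (cutEdges g₁ g₂ H S ∩ Safe).card ≤ p - 1

/-! If `s` and `t` are separated in `(H ∪ H') \ F` for a violating `F = δ_H(S)`, the component `T`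
of `s` has `δ_H(T) ⊆ F` and `δ_{H'}(T) = ∅`. Flex-connectivity of `s, t` in `H` forbids a
separating cut with fewer than `p + q` edges and at most `p - 1` safe ones, so `δ_H(T) = F` and
`T` is a violated set not covered by `H'`. Conversely, a path from `s_i` to `t_i` avoiding
`δ_H(S)` crosses `S` through an edge of `H'`. -/

section

variable {V E : Type*} (g₁ g₂ : E → V)

@[simp]
lemma mem_cutEdges {A : Finset E} {T : Finset V} {e : E} :
    e ∈ cutEdges g₁ g₂ A T ↔ e ∈ A ∧ (g₁ e ∈ T) ≠ (g₂ e ∈ T) := by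
  simp [cutEdges]

lemma cutEdges_subset (A : Finset E) (T : Finset V) : cutEdges g₁ g₂ A T ⊆ A :=
  Finset.filter_subset _ _

lemma cutEdges_mono {A B : Finset E} (hAB : A ⊆ B) (T : Finset V) :
    cutEdges g₁ g₂ A T ⊆ cutEdges g₁ g₂ B T :=
  Finset.filter_subset_filter _ hAB

lemma cutEdges_subset_of_cutEdges_sdiff_eq_empty {A F : Finset E} {T : Finset V}
    (h : cutEdges g₁ g₂ (A \ F) T = ∅) : cutEdges g₁ g₂ A T ⊆ F := by
  intro e he
  by_contra heF
  rw [mem_cutEdges] at he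
  simpa [h] using (mem_cutEdges g₁ g₂).2 ⟨Finset.mem_sdiff.2 ⟨he.1, heF⟩, he.2⟩

lemma cutEdges_union_sdiff_cutEdges_subset (A B : Finset E) (T : Finset V) :
    cutEdges g₁ g₂ ((A ∪ B) \ cutEdges g₁ g₂ A T) T ⊆ cutEdges g₁ g₂ B T := by
  intro e
  simp only [mem_cutEdges, Finset.mem_sdiff, Finset.mem_union]
  tauto

lemma ConnectedIn.cutEdges_nonempty {A : Finset E} {T : Finset V} {u v : V}
    (h : ConnectedIn g₁ g₂ A u v) (huv : (u ∈ T) ≠ (v ∈ T)) :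
    (cutEdges g₁ g₂ A T).Nonempty := by
  induction h with
  | refl => exact absurd rfl huv
  | @tail b c _ hbc ih =>
    by_cases hub : (u ∈ T) = (b ∈ T)
    · obtain ⟨e, he, hor⟩ := hbc
      refine ⟨e, (mem_cutEdges g₁ g₂).2 ⟨he, ?_⟩⟩
      rcases hor with ⟨rfl, rfl⟩ | ⟨rfl, rfl⟩
      · exact hub ▸ huv
      · exact Ne.symm (hub ▸ huv)
    · exact ih hub

noncomputable def reachSet [Fintype V] (A : Finset E) (u : V) : Finset V :=
  Finset.univ.filter (ConnectedIn g₁ g₂ A u)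

@[simp]
lemma mem_reachSet [Fintype V] {A : Finset E} {u v : V} :
    v ∈ reachSet g₁ g₂ A u ↔ ConnectedIn g₁ g₂ A u v := by
  simp [reachSet]

lemma cutEdges_reachSet [Fintype V] (A : Finset E) (u : V) :
    cutEdges g₁ g₂ A (reachSet g₁ g₂ A u) = ∅ := by
  refine Finset.eq_empty_of_forall_notMem fun e he => ?_
  obtain ⟨heA, hcross⟩ := (mem_cutEdges g₁ g₂).1 he
  refine hcross (propext ?_)
  simp only [mem_reachSet]
  exact ⟨fun h => h.tail ⟨e, heA, .inl ⟨rfl, rfl⟩⟩, fun h => h.tail ⟨e, heA, .inr ⟨rfl, rfl⟩⟩⟩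

lemma FlexConnected.add_le_card_cutEdges {Unsafe H : Finset E} {p q : ℕ} {u v : V}
    {T : Finset V} (h : FlexConnected g₁ g₂ Unsafe p q H u v) (hu : u ∈ T) (hv : v ∉ T)
    (hsafe : (cutEdges g₁ g₂ H T \ Unsafe).card ≤ p - 1) :
    p + q ≤ (cutEdges g₁ g₂ H T).card := by
  set C := cutEdges g₁ g₂ H T
  by_contra! hsmall
  -- Delete `min q |C ∩ Unsafe|` unsafe edges of `C`, then the rest of `C` by `p`-connectivity.
  obtain ⟨U, hUsub, hUcard⟩ := Finset.exists_subset_card_eq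
    (s := C ∩ Unsafe) (n := min q (C ∩ Unsafe).card) (min_le_right _ _)
  have hUC : U ⊆ C := hUsub.trans Finset.inter_subset_left
  have hDcard : (C \ U).card ≤ p - 1 := by
    have := Finset.card_sdiff_add_card_inter C Unsafe
    rw [Finset.card_sdiff_of_subset hUC]
    omega
  have hconn := h U (hUsub.trans Finset.inter_subset_right) (hUcard ▸ min_le_left _ _) (C \ U)
    (Finset.sdiff_subset_sdiff (cutEdges_subset g₁ g₂ H T) le_rfl) hDcard
  obtain ⟨e, he⟩ := hconn.cutEdges_nonempty g₁ g₂ (T := T) (by simpa [hu] using hv)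
  simp only [mem_cutEdges, Finset.mem_sdiff] at he
  exact he.1.2 ⟨(mem_cutEdges g₁ g₂).2 ⟨he.1.1.1, he.2⟩, he.1.1.2⟩

end

theorem covers_violated_cuts_iff_feasible_augmentation_general {V E : Type*} [Fintype V] [Fintype E]
    (g₁ g₂ : E → V) (Safe Unsafe : Finset E) (hpart : Unsafe = Safeᶜ)
    (p q : ℕ) (k : ℕ) (st : Fin k → V × V) (H : Finset E)
    (hH : ∀ i : Fin k, FlexConnected g₁ g₂ Unsafe p q H (st i).1 (st i).2)
    (H' : Finset E) (hH' : Disjoint H' H) :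
    (∀ S : Finset V, Violated g₁ g₂ Safe p q st H S →
        (cutEdges g₁ g₂ H' S).Nonempty) ↔
      ∀ F : Finset E,
        (∃ S : Finset V, Violated g₁ g₂ Safe p q st H S ∧ F = cutEdges g₁ g₂ H S) →
        ∀ i : Fin k, ConnectedIn g₁ g₂ ((H ∪ H') \ F) (st i).1 (st i).2 := by
  constructor
  · rintro hcov F ⟨S, ⟨-, hcard, hsafe⟩, rfl⟩ i
    by_contra hsep
    set T := reachSet g₁ g₂ ((H ∪ H') \ cutEdges g₁ g₂ H S) (st i).1
    have hT : cutEdges g₁ g₂ (H ∪ H') T ⊆ cutEdges g₁ g₂ H S :=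
      cutEdges_subset_of_cutEdges_sdiff_eq_empty g₁ g₂ (cutEdges_reachSet _ _ _ _)
    have hHT := (cutEdges_mono g₁ g₂ Finset.subset_union_left T).trans hT
    have hH'T := (cutEdges_mono g₁ g₂ Finset.subset_union_right T).trans hT
    have hsT : (st i).1 ∈ T := (mem_reachSet g₁ g₂).2 .refl
    have htT : (st i).2 ∉ T := fun h => hsep ((mem_reachSet g₁ g₂).1 h)
    have hle := (hH i).add_le_card_cutEdges g₁ g₂ hsT htT <| by
      rw [hpart, sdiff_compl, Finset.inf_eq_inter]
      exact (Finset.card_le_card (Finset.inter_subset_inter_right hHT)).trans hsafe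
    have heq := Finset.eq_of_subset_of_card_le hHT (hcard ▸ hle)
    obtain ⟨e, he⟩ := hcov T ⟨⟨i, by simpa [hsT] using htT⟩, heq ▸ hcard, heq ▸ hsafe⟩
    exact Finset.disjoint_left.1 hH' ((mem_cutEdges g₁ g₂).1 he).1
      (cutEdges_subset g₁ g₂ H S (hH'T he))
  · intro hfeas S hS
    obtain ⟨i, hi⟩ := hS.1
    exact ((hfeas _ ⟨S, hS, rfl⟩ i).cutEdges_nonempty g₁ g₂ hi).mono
      (cutEdges_union_sdiff_cutEdges_subset g₁ g₂ H H' S)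

/-- `H'` covers all violated cuts iff `H'` is a feasible augmentation for every
violating edge set `F`. -/
theorem covers_violated_cuts_iff_feasible_augmentation {V E : Type*} [Fintype V] [Fintype E]
    (g₁ g₂ : E → V) (Safe Unsafe : Finset E) (hpart : Unsafe = Safeᶜ)
    (p q : ℕ) (hp : 1 ≤ p) (k : ℕ) (st : Fin k → V × V) (H : Finset E)
    (hH : ∀ i : Fin k, FlexConnected g₁ g₂ Unsafe p q H (st i).1 (st i).2)
    (H' : Finset E) (hH' : Disjoint H' H) :
    (∀ S : Finset V, Violated g₁ g₂ Safe p q st H S →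
        (cutEdges g₁ g₂ H' S).Nonempty) ↔
      ∀ F : Finset E,
        (∃ S : Finset V, Violated g₁ g₂ Safe p q st H S ∧ F = cutEdges g₁ g₂ H S) →
        ∀ i : Fin k, ConnectedIn g₁ g₂ ((H ∪ H') \ F) (st i).1 (st i).2 :=
  covers_violated_cuts_iff_feasible_augmentation_general g₁ g₂ Safe Unsafe hpart p q k st H hH H'
    hH'
end

section
/- Let x̃ : E → ℝ≥0 be edge capacities and let y be the induced tree-edge capacities. Let α ≥ 0, let W ⊆ E be an edge set with x̃(e) ≥ α for every e ∈ W, and let u, v ∈ V be connected in W. Then every tree edge f lying on the unique path in 𝒯 between the leaves M1^{-1}(u) and M1^{-1}(v) satisfies y(f) ≥ α. -/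
open scoped Classical

/-- `(t₁, t₂ : TE → TV)` describes a (multi)graph which is a tree: it is connected and
every edge is a bridge. -/
def IsTree' {TV TE : Type*} [Fintype TE] (t₁ t₂ : TE → TV) : Prop :=
  (∀ a b : TV, ConnectedIn t₁ t₂ Finset.univ a b) ∧
    ∀ f : TE, ¬ ConnectedIn t₁ t₂ (Finset.univ \ {f}) (t₁ f) (t₂ f)

/-- `V_f`: the `M1`-images of the leaves (elements of `L`) lying in the connected component
of the tree with `f` deleted that contains the endpoint `t₁ f`. -/
noncomputable def compVerts {V TV TE : Type*} [Fintype TE] (t₁ t₂ : TE → TV)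
    (M1 : TV → V) (L : Finset TV) (f : TE) : Finset V :=
  (L.filter fun a => ConnectedIn t₁ t₂ (Finset.univ \ {f}) a (t₁ f)).image M1

/-- The capacity `y(f) = Σ_{e ∈ δ_E(V_f)} x(e)` induced on a tree edge `f` by
capacities `x` on the edges of `G`. -/
noncomputable def treeCap {V E TV TE : Type*} [Fintype E] [Fintype TE]
    (g₁ g₂ : E → V) (t₁ t₂ : TE → TV) (M1 : TV → V) (L : Finset TV)
    (x : E → NNReal) (f : TE) : NNReal :=
  ∑ e ∈ cutEdges g₁ g₂ Finset.univ (compVerts t₁ t₂ M1 L f), x e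

/-- `M^{-1}(F)`: tree edges `f` with `M2(f) ∩ F ≠ ∅`. -/
noncomputable def Minv {E TE : Type*} [Fintype TE] (M2 : TE → Finset E) (F : Finset E) :
    Finset TE :=
  Finset.univ.filter fun f => (M2 f ∩ F).Nonempty

/-- `M(E') = ⋃_{f ∈ E'} M2(f)`. -/
noncomputable def Mimg {E TE : Type*} (M2 : TE → Finset E) (E' : Finset TE) : Finset E :=
  E'.biUnion M2

/-- The connected component containing `v` of the graph on `V` with edge set `H`. -/
noncomputable def Qcomp {V E : Type*} [Fintype V] (g₁ g₂ : E → V) (H : Finset E) (v : V) :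
    Finset V :=
  Finset.univ.filter fun u => ConnectedIn g₁ g₂ H u v

/-- A vertex set `Q` is shattered (w.r.t. the tree and `M^{-1}(F)`): the leaves whose
`M1`-images lie in `Q` are not all in a single connected component of the tree with the
edges of `M^{-1}(F)` deleted. -/
def IsShattered {V E TV TE : Type*} [Fintype TE] (t₁ t₂ : TE → TV) (M1 : TV → V)
    (L : Finset TV) (M2 : TE → Finset E) (F : Finset E) (Q : Finset V) : Prop :=
  ∃ a ∈ L, ∃ b ∈ L, M1 a ∈ Q ∧ M1 b ∈ Q ∧
    ¬ ConnectedIn t₁ t₂ (Finset.univ \ Minv M2 F) a b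

/-- `Z_F`: the pairs `(A ∪ Q_{s_i}, B ∪ Q_{t_i})` over `i ∈ [k]` and pairs `(A, B)`
partitioning the union of the shattered components of `(V, H \ F)`, each shattered
component lying entirely in `A` or entirely in `B`, such that the two sets of the pair
are disjoint. -/
def ZF {V E TV TE : Type*} [Fintype V] [Fintype TE] (g₁ g₂ : E → V) (t₁ t₂ : TE → TV)
    (M1 : TV → V) (L : Finset TV) (M2 : TE → Finset E) {k : ℕ} (st : Fin k → V × V)
    (H F : Finset E) : Set (Finset V × Finset V) :=
  { P | ∃ i : Fin k, ∃ A B : Finset V,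
      Disjoint A B ∧
      A ∪ B = Finset.univ.filter
        (fun v => IsShattered t₁ t₂ M1 L M2 F (Qcomp g₁ g₂ (H \ F) v)) ∧
      (∀ v : V, IsShattered t₁ t₂ M1 L M2 F (Qcomp g₁ g₂ (H \ F) v) →
        Qcomp g₁ g₂ (H \ F) v ⊆ A ∨ Qcomp g₁ g₂ (H \ F) v ⊆ B) ∧
      P.1 = A ∪ Qcomp g₁ g₂ (H \ F) (st i).1 ∧
      P.2 = B ∪ Qcomp g₁ g₂ (H \ F) (st i).2 ∧
      Disjoint P.1 P.2 }

/-- The number of shattered connected components of `(V, H \ F)`. -/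
noncomputable def shatteredCount {V E TV TE : Type*} [Fintype V] [Fintype TE]
    (g₁ g₂ : E → V) (t₁ t₂ : TE → TV) (M1 : TV → V) (L : Finset TV)
    (M2 : TE → Finset E) (H F : Finset E) : ℕ :=
  ((Finset.univ.image fun v => Qcomp g₁ g₂ (H \ F) v).filter
    fun Q => IsShattered t₁ t₂ M1 L M2 F Q).card

/-!
Deleting `f` splits the tree into two sides, and every vertex stays attached to one of the
endpoints of `f`. Since `a` and `b` are separated, exactly one of them lies on the side of
`t₁ f`; as `M1` is injective on the leaves, exactly one of `u`, `v` lies in `V_f`. A `W`-path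
from `u` to `v` therefore crosses `δ_E(V_f)` along an edge of capacity at least `α`.
-/

namespace ConnectedIn

variable {V E : Type*} {g₁ g₂ : E → V} {H : Finset E}

theorem symm {u v : V} (h : ConnectedIn g₁ g₂ H u v) : ConnectedIn g₁ g₂ H v u :=
  (@Relation.ReflTransGen.stdSymm _ _ ⟨fun _ _ ⟨e, he, h⟩ => ⟨e, he, h.symm⟩⟩).symm _ _ h

theorem cutEdges_nonempty_s7 {S : Finset V} {u v : V} (h : ConnectedIn g₁ g₂ H u v)
    (huv : (u ∈ S) ≠ (v ∈ S)) : (cutEdges g₁ g₂ H S).Nonempty := by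
  induction h with
  | refl => exact absurd rfl huv
  | @tail b c _ hbc ih =>
    by_cases hub : (u ∈ S) = (b ∈ S)
    · obtain ⟨e, he, hends⟩ := hbc
      refine ⟨e, Finset.mem_filter.mpr ⟨he, ?_⟩⟩
      rw [hub] at huv
      rcases hends with ⟨rfl, rfl⟩ | ⟨rfl, rfl⟩
      exacts [huv, Ne.symm huv]
    · exact ih hub

theorem sdiff_singleton_or {f : E} {c : V} (h : ConnectedIn g₁ g₂ H (g₁ f) c) :
    ConnectedIn g₁ g₂ (H \ {f}) c (g₁ f) ∨ ConnectedIn g₁ g₂ (H \ {f}) c (g₂ f) := by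
  induction h with
  | refl => exact Or.inl .refl
  | @tail b c _ hbc ih =>
    obtain ⟨e, he, hends⟩ := hbc
    by_cases hef : e = f
    · subst hef
      rcases hends with ⟨-, rfl⟩ | ⟨rfl, -⟩
      exacts [Or.inr .refl, Or.inl .refl]
    · have hcb : ConnectedIn g₁ g₂ (H \ {f}) c b :=
        .single ⟨e, by simp [he, hef], hends.symm⟩
      exact ih.imp hcb.trans hcb.trans

theorem ne_of_not_sdiff_singleton (hconn : ∀ a b : V, ConnectedIn g₁ g₂ H a b) {f : E}
    {a b : V} (hab : ¬ ConnectedIn g₁ g₂ (H \ {f}) a b) :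
    ConnectedIn g₁ g₂ (H \ {f}) a (g₁ f) ≠ ConnectedIn g₁ g₂ (H \ {f}) b (g₁ f) := by
  intro hside
  have ha : ¬ ConnectedIn g₁ g₂ (H \ {f}) a (g₁ f) :=
    fun ha => hab (ha.trans (hside.mp ha).symm)
  have hb : ¬ ConnectedIn g₁ g₂ (H \ {f}) b (g₁ f) :=
    fun hb => hab ((hside.mpr hb).trans hb.symm)
  exact hab (((hconn _ a).sdiff_singleton_or.resolve_left ha).trans
    ((hconn _ b).sdiff_singleton_or.resolve_left hb).symm)

end ConnectedIn

theorem le_sum_cutEdges_of_connectedIn {V E : Type*} [Fintype E] {g₁ g₂ : E → V}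
    {x : E → NNReal} {α : NNReal} {W : Finset E} (hW : ∀ e ∈ W, α ≤ x e) {S : Finset V}
    {u v : V} (huv : ConnectedIn g₁ g₂ W u v) (hS : (u ∈ S) ≠ (v ∈ S)) :
    α ≤ ∑ e ∈ cutEdges g₁ g₂ Finset.univ S, x e := by
  obtain ⟨e, he⟩ := huv.cutEdges_nonempty_s7 hS
  calc α ≤ x e := hW e (Finset.filter_subset _ _ he)
    _ ≤ ∑ e ∈ cutEdges g₁ g₂ Finset.univ S, x e :=
      Finset.single_le_sum (fun _ _ => zero_le)
        (Finset.filter_subset_filter _ (Finset.subset_univ W) he)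

theorem mem_compVerts_iff {V TV TE : Type*} [Fintype TE] {t₁ t₂ : TE → TV} {M1 : TV → V}
    {L : Finset TV} (hM1 : Set.InjOn M1 L) {f : TE} {c : TV} (hc : c ∈ L) :
    M1 c ∈ compVerts t₁ t₂ M1 L f ↔ ConnectedIn t₁ t₂ (Finset.univ \ {f}) c (t₁ f) := by
  simp only [compVerts, Finset.mem_image, Finset.mem_filter]
  constructor
  · rintro ⟨d, ⟨hd, hdf⟩, hdc⟩
    rwa [hM1 hd hc hdc] at hdf
  · exact fun h => ⟨c, ⟨hc, h⟩, rfl⟩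

theorem treeCap_ge_of_connected_general {V E TV TE : Type*} [Fintype E] [Fintype TE]
    (g₁ g₂ : E → V) (t₁ t₂ : TE → TV) (htree : IsTree' t₁ t₂)
    (M1 : TV → V) (L : Finset TV) (hM1 : Set.BijOn M1 (↑L) Set.univ)
    (x : E → NNReal) (α : NNReal) (W : Finset E) (hW : ∀ e ∈ W, α ≤ x e)
    (u v : V) (huv : ConnectedIn g₁ g₂ W u v)
    (f : TE) (a b : TV) (ha : a ∈ L) (hb : b ∈ L) (hau : M1 a = u) (hbv : M1 b = v)
    (hf : ¬ ConnectedIn t₁ t₂ (Finset.univ \ {f}) a b) :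
    α ≤ treeCap g₁ g₂ t₁ t₂ M1 L x f := by
  refine le_sum_cutEdges_of_connectedIn hW huv ?_
  rw [← hau, ← hbv, mem_compVerts_iff hM1.injOn ha, mem_compVerts_iff hM1.injOn hb]
  exact ConnectedIn.ne_of_not_sdiff_singleton htree.1 hf

/-- If `u, v ∈ V` are connected in an edge set `W` all of whose edges have capacity at
least `α`, then every tree edge `f` on the unique tree path between the leaves mapped to
`u` and `v` (i.e. every `f` whose deletion disconnects those leaves) has induced
capacity `y(f) ≥ α`. -/
theorem treeCap_ge_of_connected {V E TV TE : Type*} [Fintype V] [Fintype E] [Fintype TE]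
    (g₁ g₂ : E → V) (t₁ t₂ : TE → TV) (htree : IsTree' t₁ t₂)
    (M1 : TV → V) (L : Finset TV) (hM1 : Set.BijOn M1 (↑L) Set.univ)
    (x : E → NNReal) (α : NNReal) (W : Finset E) (hW : ∀ e ∈ W, α ≤ x e)
    (u v : V) (huv : ConnectedIn g₁ g₂ W u v)
    (f : TE) (a b : TV) (ha : a ∈ L) (hb : b ∈ L) (hau : M1 a = u) (hbv : M1 b = v)
    (hf : ¬ ConnectedIn t₁ t₂ (Finset.univ \ {f}) a b) :
    α ≤ treeCap g₁ g₂ t₁ t₂ M1 L x f :=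
  treeCap_ge_of_connected_general g₁ g₂ t₁ t₂ htree M1 L hM1 x α W hW u v huv f a b ha hb hau hbv hf
end
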